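/- (Sign and ordering of portfolios, CRRA case) Assume μ is supported on (0,∞) with finite first moment. For t ∈ [0,T), y ∈ ℝ, x > 0, the partial-observation portfolio π̂_γ = (x/(σ(1−γ))) ∫Θ̂(T,y+z)q(z;γ)dz and myopic portfolio π^m_γ = (x/(σ(1−γ)))Θ̂(t,y) are both positive, and π̂_γ ≥ π^m_γ if 0 < γ < 1, while π̂_γ ≤ π^m_γ if γ < 0. -/

import Mathlib

/-!
Both portfolios carry the positive factor `x / (σ (1 - γ))`, so it suffices to show that
`f γ = ∫ Θ̂(T, y + z) q(z; γ) dz` is positive and increasing on `γ < 1`, with `f 0 = Θ̂(t, y)`.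
The density `q(·; γ)` is the Gaussian density reweighted by `F(T, y + ·) ^ (1 / (1 - γ))`, and the
exponent increases with `γ`. Since `F(T, ·)` and `Θ̂(T, ·)` both increase, a larger exponent moves
weight to where `Θ̂(T, y + ·)` is larger: this is Chebyshev's integral inequality for similarly
ordered functions, which also gives the monotonicity of `Θ̂(T, ·)` itself.
-/

open MeasureTheory ProbabilityTheory Real
open scoped NNReal

theorem integral_pos_of_ae_pos {α : Type*} [MeasurableSpace α] {ν : Measure α} [NeZero ν]
    {f : α → ℝ} (hf : Integrable f ν) (hpos : ∀ᵐ x ∂ν, 0 < f x) : 0 < ∫ x, f x ∂ν := by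
  refine (integral_nonneg_of_ae (hpos.mono fun _ hx => hx.le)).lt_of_ne fun h => ?_
  have hzero := (integral_eq_zero_iff_of_nonneg_ae (hpos.mono fun _ hx => hx.le) hf).mp h.symm
  obtain ⟨x, hx, hx0⟩ := (hpos.and hzero).exists
  exact hx.ne' hx0

section Chebyshev

variable {α : Type*} [MeasurableSpace α] {ν : Measure α} [SFinite ν] {f g p : α → ℝ}

theorem Monovary.integral_mul_integral_le (hfg : Monovary f g) (hp : ∀ x, 0 ≤ p x)
    (hfp : Integrable (fun x => f x * p x) ν) (hgp : Integrable (fun x => g x * p x) ν)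
    (hfgp : Integrable (fun x => f x * (g x * p x)) ν) (hp' : Integrable p ν) :
    (∫ x, f x * p x ∂ν) * (∫ x, g x * p x ∂ν) ≤ (∫ x, p x ∂ν) * ∫ x, f x * (g x * p x) ∂ν := by
  have key : ∫ z : α × α, (f z.1 * p z.1 * (g z.2 * p z.2) + g z.1 * p z.1 * (f z.2 * p z.2))
        ∂ν.prod ν
      ≤ ∫ z : α × α, (p z.1 * (f z.2 * (g z.2 * p z.2)) + f z.1 * (g z.1 * p z.1) * p z.2)
        ∂ν.prod ν := by
    refine integral_mono ((hfp.mul_prod hgp).add (hgp.mul_prod hfp))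
      ((hp'.mul_prod hfgp).add (hfgp.mul_prod hp')) fun z => ?_
    -- the two sides differ by `p z.1 * p z.2 * (f z.2 - f z.1) * (g z.2 - g z.1)`
    have := mul_nonneg (mul_nonneg (hp z.1) (hp z.2)) (hfg.sub_mul_sub_nonneg z.1 z.2)
    linarith
  rw [integral_add (hfp.mul_prod hgp) (hgp.mul_prod hfp),
    integral_add (hp'.mul_prod hfgp) (hfgp.mul_prod hp'),
    integral_prod_mul (fun x => f x * p x) (fun x => g x * p x),
    integral_prod_mul (fun x => g x * p x) (fun x => f x * p x),
    integral_prod_mul p (fun x => f x * (g x * p x)),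
    integral_prod_mul (fun x => f x * (g x * p x)) p] at key
  linarith

theorem Monovary.integral_mul_rpow_div_le [NeZero ν] {h : α → ℝ} (hfh : Monovary f h)
    (hh : ∀ x, 0 < h x) (hp : ∀ x, 0 < p x) {b₁ b₂ : ℝ} (hb : b₁ ≤ b₂)
    (hint₁ : Integrable (fun x => h x ^ b₁ * p x) ν)
    (hfint₁ : Integrable (fun x => f x * (h x ^ b₁ * p x)) ν)
    (hint₂ : Integrable (fun x => h x ^ b₂ * p x) ν)
    (hfint₂ : Integrable (fun x => f x * (h x ^ b₂ * p x)) ν) :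
    (∫ x, f x * (h x ^ b₁ * p x) ∂ν) / (∫ x, h x ^ b₁ * p x ∂ν)
      ≤ (∫ x, f x * (h x ^ b₂ * p x) ∂ν) / ∫ x, h x ^ b₂ * p x ∂ν := by
  have hweight_pos : ∀ (b : ℝ) x, 0 < h x ^ b * p x := fun b x =>
    mul_pos (rpow_pos_of_pos (hh x) b) (hp x)
  have hmono : Monovary f fun x => h x ^ (b₂ - b₁) := fun i j hij =>
    hfh (lt_of_not_ge fun hji => hij.not_ge (rpow_le_rpow (hh j).le hji (sub_nonneg.2 hb)))
  have hweight : ∀ x, h x ^ (b₂ - b₁) * (h x ^ b₁ * p x) = h x ^ b₂ * p x := fun x => by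
    rw [← mul_assoc, ← rpow_add (hh x), sub_add_cancel]
  have key := hmono.integral_mul_integral_le (p := fun x => h x ^ b₁ * p x)
    (fun x => (hweight_pos b₁ x).le) hfint₁ (by simpa only [hweight] using hint₂)
    (by simpa only [hweight] using hfint₂) hint₁
  simp only [hweight] at key
  rw [div_le_div_iff₀ (integral_pos_of_ae_pos hint₁ (ae_of_all _ (hweight_pos b₁)))
    (integral_pos_of_ae_pos hint₂ (ae_of_all _ (hweight_pos b₂)))]
  linarith

end Chebyshev

section Escort

variable {α : Type*} [MeasurableSpace α] {ν : Measure α} {f h p : α → ℝ}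

noncomputable def escort (ν : Measure α) (h p : α → ℝ) (b : ℝ) (x : α) : ℝ :=
  h x ^ b * p x / ∫ y, h y ^ b * p y ∂ν

theorem integral_mul_escort (f : α → ℝ) (b : ℝ) :
    ∫ x, f x * escort ν h p b x ∂ν = (∫ x, f x * (h x ^ b * p x) ∂ν) / ∫ x, h x ^ b * p x ∂ν := by
  simp_rw [escort, mul_div_assoc', integral_div]

theorem integral_rpow_mul_pos [NeZero ν] (hh : ∀ x, 0 < h x) (hp : ∀ x, 0 < p x) {b : ℝ}
    (hint : Integrable (fun x => h x ^ b * p x) ν) : 0 < ∫ x, h x ^ b * p x ∂ν :=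
  integral_pos_of_ae_pos hint (ae_of_all _ fun x => mul_pos (rpow_pos_of_pos (hh x) b) (hp x))

theorem escort_pos [NeZero ν] (hh : ∀ x, 0 < h x) (hp : ∀ x, 0 < p x) {b : ℝ}
    (hint : Integrable (fun x => h x ^ b * p x) ν) (x : α) : 0 < escort ν h p b x :=
  div_pos (mul_pos (rpow_pos_of_pos (hh x) b) (hp x)) (integral_rpow_mul_pos hh hp hint)

theorem Monovary.integral_mul_escort_le [SFinite ν] [NeZero ν] (hfh : Monovary f h)
    (hh : ∀ x, 0 < h x) (hp : ∀ x, 0 < p x) {b₁ b₂ : ℝ} (hb : b₁ ≤ b₂)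
    (hint₁ : Integrable (fun x => h x ^ b₁ * p x) ν)
    (hfint₁ : Integrable (fun x => f x * escort ν h p b₁ x) ν)
    (hint₂ : Integrable (fun x => h x ^ b₂ * p x) ν)
    (hfint₂ : Integrable (fun x => f x * escort ν h p b₂ x) ν) :
    ∫ x, f x * escort ν h p b₁ x ∂ν ≤ ∫ x, f x * escort ν h p b₂ x ∂ν := by
  have hunscale : ∀ {b : ℝ}, Integrable (fun x => h x ^ b * p x) ν →
      Integrable (fun x => f x * escort ν h p b x) ν →
      Integrable (fun x => f x * (h x ^ b * p x)) ν := fun {b} hint hfint =>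
    (hfint.mul_const (∫ x, h x ^ b * p x ∂ν)).congr <| ae_of_all _ fun x => by
      simp only [escort]
      rw [mul_div_assoc', div_mul_cancel₀ _ (integral_rpow_mul_pos hh hp hint).ne']
  rw [integral_mul_escort, integral_mul_escort]
  exact hfh.integral_mul_rpow_div_le hh hp hb hint₁ (hunscale hint₁ hfint₁) hint₂
    (hunscale hint₂ hfint₂)

/-- The exponent `1 / (1 - γ)` increases with `γ < 1`, hence so do the escort means of `f`. -/
theorem Monovary.monotoneOn_integral_mul_escort [SFinite ν] [NeZero ν] (hfh : Monovary f h)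
    (hh : ∀ x, 0 < h x) (hp : ∀ x, 0 < p x) {q : α → ℝ → ℝ}
    (hq : ∀ γ < (1 : ℝ), ∀ x, q x γ = escort ν h p (1 / (1 - γ)) x)
    (hint : ∀ γ < (1 : ℝ), Integrable (fun x => h x ^ (1 / (1 - γ)) * p x) ν)
    (hfint : ∀ γ < (1 : ℝ), Integrable (fun x => f x * q x γ) ν) :
    MonotoneOn (fun γ => ∫ x, f x * q x γ ∂ν) (Set.Iio 1) := by
  intro γ₁ h₁ γ₂ h₂ h₁₂
  have hfq : ∀ γ < (1 : ℝ), (fun x => f x * q x γ) = fun x => f x * escort ν h p (1 / (1 - γ)) x :=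
    fun γ hγ => funext fun x => by rw [hq γ hγ]
  have hfint' : ∀ γ < (1 : ℝ), Integrable (fun x => f x * escort ν h p (1 / (1 - γ)) x) ν :=
    fun γ hγ => hfq γ hγ ▸ hfint γ hγ
  simp only [hfq γ₁ h₁, hfq γ₂ h₂]
  exact hfh.integral_mul_escort_le hh hp (one_div_le_one_div_of_le (sub_pos.2 h₂) (by linarith))
    (hint γ₁ h₁) (hfint' γ₁ h₁) (hint γ₂ h₂) (hfint' γ₂ h₂)

end Escort

/- With `Y_s = θ s + W_s`, `driftLikelihood s u θ` is the likelihood of `Y_s = u` given the drift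
`θ`; for a prior `μ` on the drift, `marginalLikelihood μ` is the paper's `F` and `posteriorMean μ`
its filter `Θ̂`. -/
noncomputable def driftLikelihood (s u θ : ℝ) : ℝ := exp (θ * u - θ ^ 2 * s / 2)

noncomputable def marginalLikelihood (μ : Measure ℝ) (s u : ℝ) : ℝ := ∫ θ, driftLikelihood s u θ ∂μ

noncomputable def posteriorMean (μ : Measure ℝ) (s u : ℝ) : ℝ :=
  (∫ θ, θ * driftLikelihood s u θ ∂μ) / marginalLikelihood μ s u

theorem driftLikelihood_pos (s u θ : ℝ) : 0 < driftLikelihood s u θ := exp_pos _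

theorem driftLikelihood_add_right (s u w θ : ℝ) :
    driftLikelihood s (u + w) θ = driftLikelihood s u θ * exp (θ * w) := by
  rw [driftLikelihood, driftLikelihood, ← exp_add]
  ring_nf

section Posterior

variable {μ : Measure ℝ} {s : ℝ}

theorem marginalLikelihood_pos [NeZero μ] {u : ℝ} (hF : Integrable (driftLikelihood s u) μ) :
    0 < marginalLikelihood μ s u :=
  integral_exp_pos hF

theorem posteriorMean_pos [NeZero μ] (hsupp : ∀ᵐ θ ∂μ, 0 < θ) {u : ℝ}
    (hF : Integrable (driftLikelihood s u) μ)
    (hN : Integrable (fun θ => θ * driftLikelihood s u θ) μ) : 0 < posteriorMean μ s u :=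
  div_pos (integral_pos_of_ae_pos hN (hsupp.mono fun _ hθ => mul_pos hθ (driftLikelihood_pos ..)))
    (marginalLikelihood_pos hF)

theorem monotone_marginalLikelihood (hsupp : ∀ᵐ θ ∂μ, 0 < θ)
    (hF : ∀ u, Integrable (driftLikelihood s u) μ) : Monotone (marginalLikelihood μ s) :=
  fun u₁ u₂ hu => integral_mono_ae (hF u₁) (hF u₂) <| hsupp.mono fun _ hθ =>
    exp_le_exp.2 (by nlinarith)

/-- The posterior mean increases with the observation: the likelihood ratio
`driftLikelihood s u₂ θ / driftLikelihood s u₁ θ = exp (θ (u₂ - u₁))` is increasing in `θ`. -/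
theorem monotone_posteriorMean [SFinite μ] [NeZero μ]
    (hF : ∀ u, Integrable (driftLikelihood s u) μ)
    (hN : ∀ u, Integrable (fun θ => θ * driftLikelihood s u θ) μ) :
    Monotone (posteriorMean μ s) := by
  intro u₁ u₂ hu
  have hratio : ∀ θ, exp (θ * (u₂ - u₁)) * driftLikelihood s u₁ θ = driftLikelihood s u₂ θ :=
    fun θ => by rw [mul_comm, ← driftLikelihood_add_right, add_sub_cancel]
  have hmono : Monovary (fun θ : ℝ => θ) fun θ => exp (θ * (u₂ - u₁)) :=
    monotone_id.monovary fun _ _ h => exp_le_exp.2 (mul_le_mul_of_nonneg_right h (sub_nonneg.2 hu))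
  have key := hmono.integral_mul_integral_le (fun θ => (driftLikelihood_pos s u₁ θ).le) (hN u₁)
    (by simpa only [hratio] using hF u₂) (by simpa only [hratio] using hN u₂) (hF u₁)
  simp only [hratio] at key
  exact (div_le_div_iff₀ (marginalLikelihood_pos (hF u₁)) (marginalLikelihood_pos (hF u₂))).2
    (by rw [marginalLikelihood, marginalLikelihood]; linarith)

end Posterior

section Heat

variable (v : ℝ≥0)

theorem integrable_driftLikelihood_gaussianReal (s y θ : ℝ) :
    Integrable (fun z => driftLikelihood s (y + z) θ) (gaussianReal 0 v) := by
  simp_rw [driftLikelihood_add_right]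
  exact (integrable_exp_mul_gaussianReal θ).const_mul _

/-- `(s, u) ↦ driftLikelihood s u θ` is space-time harmonic: the Gaussian moment generating
function `E exp (θ Z) = exp (v θ² / 2)` compensates the extra time `v`. -/
theorem integral_driftLikelihood_gaussianReal (s y θ : ℝ) :
    ∫ z, driftLikelihood (s + v) (y + z) θ ∂gaussianReal 0 v = driftLikelihood s y θ := by
  simp_rw [driftLikelihood_add_right]
  rw [integral_const_mul, show ∫ z, exp (θ * z) ∂gaussianReal 0 v = exp (0 * θ + v * θ ^ 2 / 2)
    from congrFun mgf_fun_id_gaussianReal θ, driftLikelihood, driftLikelihood, ← exp_add]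
  ring_nf

theorem integral_integral_mul_driftLikelihood_gaussianReal (μ : Measure ℝ) [SFinite μ]
    {h : ℝ → ℝ} (hh : Measurable h) {s y : ℝ}
    (hint : Integrable (fun θ => h θ * driftLikelihood s y θ) μ) :
    ∫ z, ∫ θ, h θ * driftLikelihood (s + v) (y + z) θ ∂μ ∂gaussianReal 0 v
      = ∫ θ, h θ * driftLikelihood s y θ ∂μ := by
  have hmeas : Measurable fun p : ℝ × ℝ => h p.2 * driftLikelihood (s + v) (y + p.1) p.2 := by
    unfold driftLikelihood; fun_prop
  have hprod : Integrable (Function.uncurry fun z θ => h θ * driftLikelihood (s + v) (y + z) θ)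
      ((gaussianReal 0 v).prod μ) := by
    refine (integrable_prod_iff' hmeas.aestronglyMeasurable).2
      ⟨ae_of_all _ fun θ => (integrable_driftLikelihood_gaussianReal v _ y θ).const_mul (h θ),
        hint.norm.congr (ae_of_all _ fun θ => ?_)⟩
    simp only [norm_mul, norm_of_nonneg (driftLikelihood_pos _ _ _).le, integral_const_mul,
      integral_driftLikelihood_gaussianReal]
  rw [integral_integral_swap hprod]
  simp only [integral_const_mul, integral_driftLikelihood_gaussianReal]

end Heat

/-- The representation identity `f(0) = Θ̂(t, y)`, with `s + v` in the role of `T`. -/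
theorem posteriorMean_eq_integral_mul_escort {μ : Measure ℝ} [SFinite μ] [NeZero μ] {s y : ℝ}
    {v : ℝ≥0} (hv : v ≠ 0) (hF : ∀ u, Integrable (driftLikelihood (s + v) u) μ)
    (hFsy : Integrable (driftLikelihood s y) μ)
    (hNsy : Integrable (fun θ => θ * driftLikelihood s y θ) μ) :
    posteriorMean μ s y = ∫ z, posteriorMean μ (s + v) (y + z) *
      escort volume (fun z => marginalLikelihood μ (s + v) (y + z)) (gaussianPDFReal 0 v) 1 z := by
  have hpdf : ∀ G : ℝ → ℝ, ∫ z, G z * gaussianPDFReal 0 v z = ∫ z, G z ∂gaussianReal 0 v :=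
    fun G => by simp_rw [integral_gaussianReal_eq_integral_smul hv, smul_eq_mul, mul_comm]
  have hN : ∀ z, posteriorMean μ (s + v) (y + z) * marginalLikelihood μ (s + v) (y + z)
      = ∫ θ, θ * driftLikelihood (s + v) (y + z) θ ∂μ :=
    fun z => div_mul_cancel₀ _ (marginalLikelihood_pos (hF _)).ne'
  have hF' := integral_integral_mul_driftLikelihood_gaussianReal v μ (h := fun _ => 1)
    measurable_const (by simpa only [one_mul] using hFsy)
  simp only [one_mul] at hF'
  simp_rw [integral_mul_escort, Real.rpow_one, ← mul_assoc, hN, hpdf]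
  rw [integral_integral_mul_driftLikelihood_gaussianReal v μ (h := fun θ => θ) measurable_id hNsy]
  simp only [marginalLikelihood]
  rw [hF', posteriorMean, marginalLikelihood]

theorem stmt17_general (μ : Measure ℝ) [IsProbabilityMeasure μ]
    (hsupp : ∀ᵐ θ ∂μ, 0 < θ)
    (T t y x σ : ℝ) (htT : t < T) (hx : 0 < x) (hσ : 0 < σ)
    (F Θhat : ℝ → ℝ → ℝ)
    (hF : ∀ s u, F s u = ∫ θ, Real.exp (θ * u - θ ^ 2 * s / 2) ∂μ)
    (hΘ : ∀ s u, Θhat s u =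
      (∫ θ, θ * Real.exp (θ * u - θ ^ 2 * s / 2) ∂μ) / F s u)
    (hFint : ∀ s u, Integrable (fun θ : ℝ => Real.exp (θ * u - θ ^ 2 * s / 2)) μ)
    (hNint : ∀ s u, Integrable (fun θ : ℝ => θ * Real.exp (θ * u - θ ^ 2 * s / 2)) μ)
    (φ : ℝ → ℝ)
    (hφ : ∀ z, φ z = Real.exp (-z ^ 2 / (2 * (T - t))) / Real.sqrt (2 * π * (T - t)))
    (q : ℝ → ℝ → ℝ)
    (hq : ∀ γ < (1:ℝ), ∀ z, q z γ =
      F T (y + z) ^ (1 / (1 - γ)) * φ z / ∫ w, F T (y + w) ^ (1 / (1 - γ)) * φ w)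
    (hqint : ∀ γ < (1:ℝ), Integrable (fun w => F T (y + w) ^ (1 / (1 - γ)) * φ w))
    (hfint : ∀ γ < (1:ℝ), Integrable (fun z => Θhat T (y + z) * q z γ))
    (πhat πm : ℝ → ℝ)
    (hπhat : ∀ γ < (1:ℝ), πhat γ =
      x / (σ * (1 - γ)) * ∫ z, Θhat T (y + z) * q z γ)
    (hπm : ∀ γ < (1:ℝ), πm γ = x / (σ * (1 - γ)) * Θhat t y) :
    (∀ γ < (1:ℝ), 0 < πhat γ ∧ 0 < πm γ) ∧
    (∀ γ : ℝ, 0 < γ → γ < 1 → πm γ ≤ πhat γ) ∧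
    (∀ γ : ℝ, γ < 0 → πhat γ ≤ πm γ) := by
  obtain rfl : F = marginalLikelihood μ := funext₂ hF
  obtain rfl : Θhat = posteriorMean μ := funext₂ hΘ
  set v := (T - t).toNNReal
  have hv : v ≠ 0 := by simpa [v] using htT
  have hT : t + v = T := by simp [v, htT.le]
  obtain rfl : φ = gaussianPDFReal 0 v := funext fun z => by
    rw [hφ, gaussianPDFReal, Real.coe_toNNReal _ (sub_pos.2 htT).le, sub_zero, div_eq_inv_mul]
  have hFpos : ∀ z, 0 < marginalLikelihood μ T (y + z) := fun _ =>
    marginalLikelihood_pos (hFint T _)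
  have hφpos : ∀ z, 0 < gaussianPDFReal 0 v z := fun _ => gaussianPDFReal_pos _ _ _ hv
  have hΘpos : ∀ s u, 0 < posteriorMean μ s u := fun s u =>
    posteriorMean_pos hsupp (hFint s u) (hNint s u)
  have hmv : Monovary (fun z => posteriorMean μ T (y + z))
      fun z => marginalLikelihood μ T (y + z) :=
    ((monotone_posteriorMean (hFint T) (hNint T)).comp (monotone_id.const_add y)).monovary
      ((monotone_marginalLikelihood hsupp (hFint T)).comp (monotone_id.const_add y))
  have hmono := hmv.monotoneOn_integral_mul_escort hFpos hφpos hq hqint hfint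
  have h0 : ∫ z, posteriorMean μ T (y + z) * q z 0 = posteriorMean μ t y := by
    rw [posteriorMean_eq_integral_mul_escort hv (hFint _) (hFint t y) (hNint t y), hT]
    simp_rw [hq 0 one_pos, escort]
    norm_num
  have hK : ∀ γ < (1:ℝ), 0 < x / (σ * (1 - γ)) := fun _ hγ =>
    div_pos hx (mul_pos hσ (sub_pos.2 hγ))
  refine ⟨fun γ hγ => ⟨?_, ?_⟩, fun γ hγ0 hγ1 => ?_, fun γ hγ0 => ?_⟩
  · rw [hπhat γ hγ]
    refine mul_pos (hK γ hγ) (integral_pos_of_ae_pos (hfint γ hγ) (ae_of_all _ fun z => ?_))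
    rw [hq γ hγ z]
    exact mul_pos (hΘpos _ _) (escort_pos hFpos hφpos (hqint γ hγ) z)
  · rw [hπm γ hγ]
    exact mul_pos (hK γ hγ) (hΘpos t y)
  · rw [hπm γ hγ1, hπhat γ hγ1, ← h0]
    exact mul_le_mul_of_nonneg_left (hmono (Set.mem_Iio.2 zero_lt_one) hγ1 hγ0.le) (hK γ hγ1).le
  · have hγ1 : γ < 1 := hγ0.trans one_pos
    rw [hπm γ hγ1, hπhat γ hγ1, ← h0]
    exact mul_le_mul_of_nonneg_left (hmono hγ1 (Set.mem_Iio.2 zero_lt_one) hγ0.le) (hK γ hγ1).le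

/-- sign and ordering of portfolios in the CRRA case. With μ
supported on `(0,∞)`, `x > 0`, `σ > 0`, the partial-observation portfolio
`π̂_γ = (x/(σ(1-γ))) ∫ Θ̂(T,y+z) q(z;γ) dz` and the myopic portfolio
`π^m_γ = (x/(σ(1-γ))) Θ̂(t,y)` are both positive, with `π̂_γ ≥ π^m_γ` when
`0 < γ < 1` and `π̂_γ ≤ π^m_γ` when `γ < 0`. -/
theorem stmt17 (μ : Measure ℝ) [IsProbabilityMeasure μ]
    (hsupp : ∀ᵐ θ ∂μ, 0 < θ)
    (hmom : Integrable (fun θ : ℝ => |θ|) μ)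
    (T t y x σ : ℝ) (ht : 0 ≤ t) (htT : t < T) (hx : 0 < x) (hσ : 0 < σ)
    (F Θhat : ℝ → ℝ → ℝ)
    (hF : ∀ s u, F s u = ∫ θ, Real.exp (θ * u - θ ^ 2 * s / 2) ∂μ)
    (hΘ : ∀ s u, Θhat s u =
      (∫ θ, θ * Real.exp (θ * u - θ ^ 2 * s / 2) ∂μ) / F s u)
    (hFint : ∀ s u, Integrable (fun θ : ℝ => Real.exp (θ * u - θ ^ 2 * s / 2)) μ)
    (hNint : ∀ s u, Integrable (fun θ : ℝ => θ * Real.exp (θ * u - θ ^ 2 * s / 2)) μ)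
    (φ : ℝ → ℝ)
    (hφ : ∀ z, φ z = Real.exp (-z ^ 2 / (2 * (T - t))) / Real.sqrt (2 * π * (T - t)))
    (q : ℝ → ℝ → ℝ)
    (hq : ∀ γ < (1:ℝ), ∀ z, q z γ =
      F T (y + z) ^ (1 / (1 - γ)) * φ z / ∫ w, F T (y + w) ^ (1 / (1 - γ)) * φ w)
    (hqint : ∀ γ < (1:ℝ), Integrable (fun w => F T (y + w) ^ (1 / (1 - γ)) * φ w))
    (hfint : ∀ γ < (1:ℝ), Integrable (fun z => Θhat T (y + z) * q z γ))
    (πhat πm : ℝ → ℝ)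
    (hπhat : ∀ γ < (1:ℝ), πhat γ =
      x / (σ * (1 - γ)) * ∫ z, Θhat T (y + z) * q z γ)
    (hπm : ∀ γ < (1:ℝ), πm γ = x / (σ * (1 - γ)) * Θhat t y) :
    (∀ γ < (1:ℝ), 0 < πhat γ ∧ 0 < πm γ) ∧
    (∀ γ : ℝ, 0 < γ → γ < 1 → πm γ ≤ πhat γ) ∧
    (∀ γ : ℝ, γ < 0 → πhat γ ≤ πm γ) :=
  stmt17_general μ hsupp T t y x σ htT hx hσ F Θhat hF hΘ hFint hNint φ hφ q hq hqint hfint πhat πm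
    hπhat hπm
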